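/- arXiv:1408.1461 — 6 statements merged into one kernel-verified Lean document; each statement's English description precedes it below -/
import Mathlib

section
/- Let H be a finite simple graph, let 𝓕 be a set of 3-patterns, and let H⁺ be the constraint digraph of H with respect to 𝓕. If there exists a circuit contained in a single strong component of H⁺, then H has no 𝓕-free linear ordering of its vertices. -/
open SimpleGraph

variable {V : Type*}

/-- A `k`-pattern (a graph on vertex set `Fin k`) occurs in `H` under the ordering `lt`:
there are vertices `v 0 < v 1 < ⋯ < v (k-1)` whose induced ordered subgraph is the pattern. -/
def PatOccurs {k : ℕ} (H : SimpleGraph V) (lt : V → V → Prop)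
    (F : SimpleGraph (Fin k)) : Prop :=
  ∃ v : Fin k → V, (∀ i j : Fin k, i < j → lt (v i) (v j)) ∧
    ∀ i j : Fin k, H.Adj (v i) (v j) ↔ F.Adj i j

/-- The ordering `lt` is `𝓕`-free for `H`: no pattern of `𝓕` occurs under it. -/
def FreeOrder {k : ℕ} (H : SimpleGraph V) (𝓕 : Set (SimpleGraph (Fin k)))
    (lt : V → V → Prop) : Prop :=
  ∀ F ∈ 𝓕, ¬ PatOccurs H lt F

/-- `H` admits an `𝓕`-free linear ordering of its vertices. -/
def HasFreeOrdering {k : ℕ} (H : SimpleGraph V)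
    (𝓕 : Set (SimpleGraph (Fin k))) : Prop :=
  ∃ lt : V → V → Prop, IsStrictTotalOrder V lt ∧ FreeOrder H 𝓕 lt

/-- The triple `(x, y, z)`, in this order, induces the 3-pattern `F` in `H`. -/
def Induces3 (H : SimpleGraph V) (F : SimpleGraph (Fin 3)) (x y z : V) : Prop :=
  x ≠ y ∧ x ≠ z ∧ y ≠ z ∧
    (H.Adj x y ↔ F.Adj 0 1) ∧ (H.Adj x z ↔ F.Adj 0 2) ∧ (H.Adj y z ↔ F.Adj 1 2)

/-- The arc relation of the constraint digraph `H⁺` of `H` with respect to `𝓕 ⊆ F_3`: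
there is an arc from `(x,y)` to `(z,y)` and an arc from `(y,z)` to `(y,x)` whenever
`x, y, z`, ordered `x < y < z`, induce a forbidden pattern of `𝓕`. -/
def Arc (H : SimpleGraph V) (𝓕 : Set (SimpleGraph (Fin 3))) :
    V × V → V × V → Prop := fun p q =>
  ∃ x y z : V, (∃ F ∈ 𝓕, Induces3 H F x y z) ∧
    ((p = (x, y) ∧ q = (z, y)) ∨ (p = (y, z) ∧ q = (y, x)))

/-- `p` and `q` lie in the same strong component of the digraph with arc relation `r`. -/
def SameSCC {α : Type*} (r : α → α → Prop) (p q : α) : Prop :=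
  Relation.ReflTransGen r p q ∧ Relation.ReflTransGen r q p

/-- `S` is a strong component of the constraint digraph `H⁺`. -/
def IsSCCOf (H : SimpleGraph V) (𝓕 : Set (SimpleGraph (Fin 3)))
    (S : Set (V × V)) : Prop :=
  ∃ p : V × V, p.1 ≠ p.2 ∧ S = {q | SameSCC (Arc H 𝓕) p q}

/-- `S` contains a circuit `(x_0,x_1), (x_1,x_2), …, (x_{n-1},x_n), (x_n,x_0)` with `n ≥ 1`. -/
def HasCircuitIn {α : Type*} (S : Set (α × α)) : Prop :=
  ∃ n : ℕ, 1 ≤ n ∧ ∃ x : Fin (n + 1) → α, ∀ i : Fin (n + 1), (x i, x (i + 1)) ∈ S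

/-- Some strong component of the constraint digraph `H⁺` contains a circuit. -/
def HasSCCCircuit (H : SimpleGraph V) (𝓕 : Set (SimpleGraph (Fin 3))) : Prop :=
  ∃ S : Set (V × V), IsSCCOf H 𝓕 S ∧ HasCircuitIn S

/-- `H` has an invertible pair: distinct vertices `x, y` with `(x,y)` and `(y,x)` in the
same strong component of `H⁺`. -/
def InvertiblePair (H : SimpleGraph V) (𝓕 : Set (SimpleGraph (Fin 3))) : Prop :=
  ∃ x y : V, x ≠ y ∧ SameSCC (Arc H 𝓕) (x, y) (y, x)

/-- The 3-pattern `{13}`. -/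
def P13 : SimpleGraph (Fin 3) := fromEdgeSet {s(0, 2)}
/-- The 3-pattern `{12,23}`. -/
def P12_23 : SimpleGraph (Fin 3) := fromEdgeSet {s(0, 1), s(1, 2)}
/-- The 3-pattern `{12,13}`. -/
def P12_13 : SimpleGraph (Fin 3) := fromEdgeSet {s(0, 1), s(0, 2)}
/-- The 3-pattern `{13,23}`. -/
def P13_23 : SimpleGraph (Fin 3) := fromEdgeSet {s(0, 2), s(1, 2)}

/-- `𝓕` is nice. -/
def NicePatterns (𝓕 : Set (SimpleGraph (Fin 3))) : Prop :=
  𝓕 = {P13} ∨ 𝓕 = {P12_23} ∨ 𝓕 = {P13, P13_23} ∨ 𝓕 = {P13, P12_13, P13_23}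

/-! A free linear order `<` propagates along the arcs of `H⁺`: an arc `(x,y) → (z,y)` comes
from a forbidden triple `x, y, z`, so `x < y` forces `z < y` (else `x < y < z` realizes the
pattern), and symmetrically for arcs `(y,z) → (y,x)`. Hence all pairs of one strong component
are oriented alike — all increasing or all decreasing — and a circuit of such pairs
`x₀ < x₁ < ⋯ < xₙ < x₀` (or its reverse) is impossible. -/

open Relation Function

lemma not_forall_rel_succ {α : Type*} {r : α → α → Prop} [IsStrictOrder α r] {n : ℕ}
    (x : Fin (n + 1) → α) : ¬ ∀ i, r (x i) (x (i + 1)) := by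
  intro hx
  have reach (k : Fin (n + 1)) : TransGen r (x 0) (x (k + 1)) := by
    induction k using Fin.induction with
    | zero => exact .single (hx 0)
    | succ k ih => exact ih.tail (Fin.coeSucc_eq_succ ▸ hx k.succ)
  have loop := reach (Fin.last n)
  rw [Fin.last_add_one, transGen_eq_self] at loop
  exact irrefl_of r _ loop

section ConstraintDigraph

variable {H : SimpleGraph V} {𝓕 : Set (SimpleGraph (Fin 3))} {p q : V × V}

lemma Induces3.patOccurs {F : SimpleGraph (Fin 3)} {lt : V → V → Prop} [IsTrans V lt]
    {x y z : V} (h : Induces3 H F x y z) (hxy : lt x y) (hyz : lt y z) :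
    PatOccurs H lt F := by
  obtain ⟨-, -, -, h01, h02, h12⟩ := h
  refine ⟨![x, y, z], fun i j hij => ?_, fun i j => ?_⟩
  · fin_cases i <;> fin_cases j <;> simp_all [Fin.lt_def]
    exact trans_of lt hxy hyz
  · fin_cases i <;> fin_cases j <;>
      simp_all [H.adj_comm, F.adj_comm 1 0, F.adj_comm 2 0, F.adj_comm 2 1]

lemma Arc.target_ne (h : Arc H 𝓕 p q) : q.1 ≠ q.2 := by
  obtain ⟨x, y, z, ⟨F, -, hxy, -, hyz, -⟩, ⟨-, rfl⟩ | ⟨-, rfl⟩⟩ := h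
  · exact hyz.symm
  · exact hxy.symm

lemma ne_of_reflTransGen_arc (h : ReflTransGen (Arc H 𝓕) p q) (hp : p.1 ≠ p.2) :
    q.1 ≠ q.2 := by
  rcases h.cases_tail with rfl | ⟨_, -, harc⟩
  · exact hp
  · exact harc.target_ne

namespace FreeOrder

variable {lt : V → V → Prop} [IsStrictTotalOrder V lt]

lemma lt_of_arc (hfree : FreeOrder H 𝓕 lt) (h : Arc H 𝓕 p q) (hp : lt p.1 p.2) :
    lt q.1 q.2 := by
  obtain ⟨x, y, z, ⟨F, hF, hind⟩, ⟨rfl, rfl⟩ | ⟨rfl, rfl⟩⟩ := h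
  · by_contra hyz
    exact hind.2.2.1 (Std.Trichotomous.trichotomous y z
      (fun hyz' => hfree F hF (hind.patOccurs hp hyz')) hyz)
  · by_contra hxy
    exact hind.1 (Std.Trichotomous.trichotomous x y
      (fun hxy' => hfree F hF (hind.patOccurs hxy' hp)) hxy)

lemma lt_of_reflTransGen_arc (hfree : FreeOrder H 𝓕 lt) (h : ReflTransGen (Arc H 𝓕) p q)
    (hp : lt p.1 p.2) : lt q.1 q.2 := by
  induction h with
  | refl => exact hp
  | tail _ harc ih => exact hfree.lt_of_arc harc ih

lemma lt_iff_of_sameSCC (hfree : FreeOrder H 𝓕 lt) (h : SameSCC (Arc H 𝓕) p q) :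
    lt p.1 p.2 ↔ lt q.1 q.2 :=
  ⟨hfree.lt_of_reflTransGen_arc h.1, hfree.lt_of_reflTransGen_arc h.2⟩

end FreeOrder

end ConstraintDigraph

theorem stmt_0_general (H : SimpleGraph V) (𝓕 : Set (SimpleGraph (Fin 3)))
    (h : HasSCCCircuit H 𝓕) : ¬ HasFreeOrdering H 𝓕 := by
  rintro ⟨lt, _, hfree⟩
  obtain ⟨_, ⟨p, hp, rfl⟩, n, -, x, hx⟩ := h
  by_cases hlt : lt p.1 p.2
  · exact not_forall_rel_succ x fun i => (hfree.lt_iff_of_sameSCC (hx i)).1 hlt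
  · refine not_forall_rel_succ (r := swap lt) x fun i => ?_
    have hforth : ¬ lt (x i) (x (i + 1)) := fun h => hlt ((hfree.lt_iff_of_sameSCC (hx i)).2 h)
    by_contra hback
    exact ne_of_reflTransGen_arc (hx i).1 hp (Std.Trichotomous.trichotomous _ _ hforth hback)

/-- If there exists a circuit contained in a single strong component of the constraint
digraph `H⁺`, then `H` has no `𝓕`-free ordering. -/
theorem stmt_0 [Fintype V] (H : SimpleGraph V) (𝓕 : Set (SimpleGraph (Fin 3)))
    (h : HasSCCCircuit H 𝓕) : ¬ HasFreeOrdering H 𝓕 :=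
  stmt_0_general H 𝓕 h
end

section
/- Let H be a finite simple graph, 𝓕 ⊆ F_3, and H⁺ the constraint digraph of H with respect to 𝓕. For every strong component S of H⁺: (i) S contains a circuit if and only if its dual component S̄ = {(y,x) : (x,y) ∈ S} contains a circuit; and (ii) if S ∩ S̄ ≠ ∅, then S contains a circuit (indeed a circuit (x_0,x_1),(x_1,x_0) of length two). -/
open SimpleGraph

variable {V : Type*}

theorem HasCircuitIn.swap {α : Type*} {T : Set (α × α)} (h : HasCircuitIn T) :
    HasCircuitIn {p : α × α | (p.2, p.1) ∈ T} := by
  obtain ⟨n, hn, x, hx⟩ := h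
  refine ⟨n, hn, fun i => x (-i), fun i => ?_⟩
  -- the circuit read backwards, using `-i = -(i + 1) + 1` in `Fin (n + 1)`
  simpa [neg_add, neg_add_cancel_right] using hx (-(i + 1))

theorem HasCircuitIn.swap_iff {α : Type*} {T : Set (α × α)} :
    HasCircuitIn {p : α × α | (p.2, p.1) ∈ T} ↔ HasCircuitIn T :=
  ⟨fun h => by simpa using h.swap, HasCircuitIn.swap⟩

theorem Arc.target_fst_ne_snd {H : SimpleGraph V} {𝓕 : Set (SimpleGraph (Fin 3))}
    {p q : V × V} (h : Arc H 𝓕 p q) : q.1 ≠ q.2 := by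
  obtain ⟨x, y, z, ⟨_, -, hxy, -, hyz, -⟩, ⟨-, rfl⟩ | ⟨-, rfl⟩⟩ := h
  · exact hyz.symm
  · exact hxy.symm

theorem Arc.fst_ne_snd_of_reflTransGen {H : SimpleGraph V} {𝓕 : Set (SimpleGraph (Fin 3))}
    {p q : V × V} (h : Relation.ReflTransGen (Arc H 𝓕) p q) (hp : p.1 ≠ p.2) :
    q.1 ≠ q.2 := by
  rcases h.cases_tail with rfl | ⟨_, -, harc⟩
  · exact hp
  · exact harc.target_fst_ne_snd

theorem stmt_6_general (H : SimpleGraph V) (𝓕 : Set (SimpleGraph (Fin 3)))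
    (S : Set (V × V)) (hS : IsSCCOf H 𝓕 S) :
    (HasCircuitIn S ↔ HasCircuitIn {p : V × V | (p.2, p.1) ∈ S}) ∧
      ((S ∩ {p : V × V | (p.2, p.1) ∈ S}).Nonempty →
        ∃ x₀ x₁ : V, x₀ ≠ x₁ ∧ (x₀, x₁) ∈ S ∧ (x₁, x₀) ∈ S) := by
  obtain ⟨p, hp, rfl⟩ := hS
  refine ⟨HasCircuitIn.swap_iff.symm, ?_⟩
  rintro ⟨⟨x, y⟩, hxy, hyx⟩
  exact ⟨x, y, Arc.fst_ne_snd_of_reflTransGen hxy.1 hp, hxy, hyx⟩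

/-- For every strong component `S` of `H⁺`: (i) `S` contains a circuit iff its dual
component `S̄ = {(y,x) : (x,y) ∈ S}` contains a circuit; and (ii) if `S ∩ S̄ ≠ ∅`, then
`S` contains a circuit of length two `(x₀,x₁), (x₁,x₀)`. -/
theorem stmt_6 [Fintype V] (H : SimpleGraph V) (𝓕 : Set (SimpleGraph (Fin 3)))
    (S : Set (V × V)) (hS : IsSCCOf H 𝓕 S) :
    (HasCircuitIn S ↔ HasCircuitIn {p : V × V | (p.2, p.1) ∈ S}) ∧
      ((S ∩ {p : V × V | (p.2, p.1) ∈ S}).Nonempty →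
        ∃ x₀ x₁ : V, x₀ ≠ x₁ ∧ (x₀, x₁) ∈ S ∧ (x₁, x₀) ∈ S) :=
  stmt_6_general H 𝓕 S hS
end

section
/- Let H be a finite simple graph and let 𝓕 consist of the single 3-pattern {12,23} or the single 3-pattern {13}. Then the constraint digraph H⁺ of H with respect to 𝓕 is symmetric: for all ordered pairs (u,v), (u',v') of distinct vertices, there is an arc from (u,v) to (u',v') in H⁺ if and only if there is an arc from (u',v') to (u,v) in H⁺. -/
open SimpleGraph

variable {V : Type*}

/-- If `𝓕` consists of the single pattern `{12,23}` or the single pattern `{13}`, then the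
constraint digraph `H⁺` is symmetric. -/
theorem stmt_7 [Fintype V] (H : SimpleGraph V) (𝓕 : Set (SimpleGraph (Fin 3)))
    (h𝓕 : 𝓕 = {P12_23} ∨ 𝓕 = {P13}) (u v u' v' : V)
    (huv : u ≠ v) (huv' : u' ≠ v') :
    Arc H 𝓕 (u, v) (u', v') ↔ Arc H 𝓕 (u', v') (u, v) := by
  have key : ∀ p q : V × V, Arc H 𝓕 p q → Arc H 𝓕 q p := by
    rintro p q ⟨x, y, z, ⟨F, hF𝓕, hxy, hxz, hyz, h01, h02, h12⟩, hpq⟩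
    have hsym : (F.Adj 0 1 ↔ F.Adj 1 2) ∧ (F.Adj 0 2 ↔ F.Adj 0 2) := by
      rcases h𝓕 with h | h <;> subst h <;>
        simp only [Set.mem_singleton_iff] at hF𝓕 <;> subst hF𝓕 <;>
        constructor <;>
        simp [P12_23, P13, fromEdgeSet_adj, Sym2.eq, Sym2.rel_iff', Prod.ext_iff] <;>
        decide
    have hrev : Induces3 H F z y x := by
      refine ⟨hyz.symm, hxz.symm, hxy.symm, ?_, ?_, ?_⟩
      · rw [H.adj_comm]; exact h12.trans hsym.1.symm
      · rw [H.adj_comm]; exact h02.trans hsym.2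
      · rw [H.adj_comm]; exact h01.trans hsym.1
    rcases hpq with ⟨hp, hq⟩ | ⟨hp, hq⟩
    · exact ⟨z, y, x, ⟨F, hF𝓕, hrev⟩, Or.inl ⟨hq, hp⟩⟩
    · exact ⟨z, y, x, ⟨F, hF𝓕, hrev⟩, Or.inr ⟨hq, hp⟩⟩
  exact ⟨key _ _, key _ _⟩
end

section
/- Let H be a finite simple graph and let 𝓕 consist of the single 3-pattern {12,13}. Then the constraint digraph H⁺ of H with respect to 𝓕 contains no digons: if there is an arc from (u,v) to (u',v') in H⁺, then there is no arc from (u',v') to (u,v) in H⁺. -/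
open SimpleGraph

variable {V : Type*}

/-- If `𝓕` consists of the single pattern `{12,13}`, then the constraint digraph `H⁺`
contains no digons. -/
theorem stmt_8 [Fintype V] (H : SimpleGraph V) (p q : V × V)
    (h : Arc H {P12_13} p q) : ¬ Arc H {P12_13} q p := by
  have e01 : P12_13.Adj 0 1 := by simp [P12_13]
  have e02 : P12_13.Adj 0 2 := by simp [P12_13]
  have e12 : ¬ P12_13.Adj 1 2 := by simp [P12_13]
  rintro ⟨x', y', z', ⟨F', hF', hI'⟩, hc'⟩
  obtain ⟨x, y, z, ⟨F, hF, hI⟩, hc⟩ := h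
  simp only [Set.mem_singleton_iff] at hF hF'
  subst hF hF'
  obtain ⟨hxy, hxz, hyz, a1, a2, a3⟩ := hI
  obtain ⟨hxy', hxz', hyz', a1', a2', a3'⟩ := hI'
  have Hxy : H.Adj x y := a1.mpr e01
  have Hxz : H.Adj x z := a2.mpr e02
  have Hyz : ¬ H.Adj y z := fun h => e12 (a3.mp h)
  have Hxy' : H.Adj x' y' := a1'.mpr e01
  have Hxz' : H.Adj x' z' := a2'.mpr e02
  have Hyz' : ¬ H.Adj y' z' := fun h => e12 (a3'.mp h)
  rcases hc with ⟨hp, hq⟩ | ⟨hp, hq⟩ <;> rcases hc' with ⟨hq', hp'⟩ | ⟨hq', hp'⟩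
  · injection hq.symm.trans hq' with h1 h2
    subst h1; subst h2
    exact Hyz (H.adj_symm Hxy')
  · injection hq.symm.trans hq' with h1 h2
    injection hp.symm.trans hp' with h3 h4
    exact hxz (h3.trans h1.symm)
  · injection hq.symm.trans hq' with h1 h2
    injection hp.symm.trans hp' with h3 h4
    exact hxz (h2.trans h4.symm)
  · injection hp.symm.trans hp' with h3 h4
    subst h3; subst h4
    exact Hyz (H.adj_symm Hxy')
end

section
/- Let H be a finite simple graph and 𝓕 ⊆ F_3 with {13,23} ∈ 𝓕. If C = w_1 w_2 ... w_k w_1 is an induced cycle of length k ≥ 4 in H, then the strong component of the constraint digraph H⁺ containing the pair (w_1, w_2) contains a circuit. -/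
/-! For consecutive vertices `u - v - u'` of the induced cycle, both orderings `u' < u < v` and
`u < u' < v` induce `{13,23}`, giving arcs `(u, v) → (u, u') → (v, u')` in `H⁺`. Going once
around the cycle, all pairs `(w_i, w_{i+1})` are mutually reachable, and the cycle itself is the
circuit. -/

open SimpleGraph

variable {V : Type*}

open Relation

theorem Fin.reflTransGen_of_succ {α : Type*} {n : ℕ} {r : α → α → Prop}
    {f : Fin (n + 1) → α} (h : ∀ i, ReflTransGen r (f i) (f (i + 1))) (i j : Fin (n + 1)) :
    ReflTransGen r (f i) (f j) := by
  open Fin.NatCast in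
  have reach : ∀ k : ℕ, ReflTransGen r (f i) (f (i + k)) := by
    intro k
    induction k with
    | zero => simpa using .refl
    | succ k ih => simpa [add_assoc] using ih.trans (h (i + k))
  simpa using reach (j - i).val

theorem induces3_P13_23 {H : SimpleGraph V} {x y z : V} (hne : x ≠ y) (hxy : ¬ H.Adj x y)
    (hxz : H.Adj x z) (hyz : H.Adj y z) : Induces3 H P13_23 x y z :=
  ⟨hne, hxz.ne, hyz.ne, by simp [P13_23, hxy], by simp [P13_23, hxz], by simp [P13_23, hyz]⟩

theorem reflTransGen_arc_of_induced_path {H : SimpleGraph V} {𝓕 : Set (SimpleGraph (Fin 3))}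
    (hF : P13_23 ∈ 𝓕) {x y z : V} (hne : x ≠ y) (hxy : ¬ H.Adj x y) (hxz : H.Adj x z)
    (hzy : H.Adj z y) : ReflTransGen (Arc H 𝓕) (x, z) (z, y) := by
  have first : Arc H 𝓕 (x, z) (x, y) :=
    ⟨y, x, z, ⟨_, hF, induces3_P13_23 hne.symm (fun h => hxy h.symm) hzy.symm hxz⟩,
      Or.inr ⟨rfl, rfl⟩⟩
  have second : Arc H 𝓕 (x, y) (z, y) :=
    ⟨x, y, z, ⟨_, hF, induces3_P13_23 hne hxy hxz hzy.symm⟩, Or.inl ⟨rfl, rfl⟩⟩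
  exact .head first (.single second)

theorem stmt_9_general (H : SimpleGraph V) (𝓕 : Set (SimpleGraph (Fin 3)))
    (hF : P13_23 ∈ 𝓕) (m : ℕ) (w : Fin (m + 4) → V)
    (hinj : Function.Injective w)
    (hcyc : ∀ i j : Fin (m + 4), H.Adj (w i) (w j) ↔ (j = i + 1 ∨ i = j + 1)) :
    HasCircuitIn {q : V × V | SameSCC (Arc H 𝓕) (w 0, w 1) q} := by
  have adj_succ (i : Fin (m + 4)) : H.Adj (w i) (w (i + 1)) := (hcyc _ _).2 (.inl rfl)
  have two_ne_zero : (2 : Fin (m + 4)) ≠ 0 := by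
    simp [Fin.ext_iff, Nat.mod_eq_of_lt (show 2 < m + 4 by omega)]
  have three_ne_zero : (3 : Fin (m + 4)) ≠ 0 := by
    simp [Fin.ext_iff, Nat.mod_eq_of_lt (show 3 < m + 4 by omega)]
  have step (i : Fin (m + 4)) :
      ReflTransGen (Arc H 𝓕) (w i, w (i + 1)) (w (i + 1), w (i + 1 + 1)) := by
    have skip_ne : i + 1 + 1 ≠ i := fun h =>
      two_ne_zero (by simpa [add_assoc] using h : (1 + 1 : Fin (m + 4)) = 0)
    have skip_not_adj : ¬ H.Adj (w i) (w (i + 1 + 1)) := by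
      rw [hcyc]
      rintro (h | h)
      · simp [add_assoc] at h
      · exact three_ne_zero (by simpa [add_assoc] using h.symm : (1 + (1 + 1) : Fin (m + 4)) = 0)
    exact reflTransGen_arc_of_induced_path hF (hinj.ne skip_ne.symm) skip_not_adj
      (adj_succ i) (adj_succ (i + 1))
  exact ⟨m + 3, by omega, w, fun i =>
    ⟨Fin.reflTransGen_of_succ (f := fun i => (w i, w (i + 1))) step 0 i,
      Fin.reflTransGen_of_succ (f := fun i => (w i, w (i + 1))) step i 0⟩⟩

/-- If `{13,23} ∈ 𝓕` and `w₁ w₂ … w_k w₁` is an induced cycle of length `k ≥ 4` in `H`,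
then the strong component of `H⁺` containing `(w₁, w₂)` contains a circuit. -/
theorem stmt_9 [Fintype V] (H : SimpleGraph V) (𝓕 : Set (SimpleGraph (Fin 3)))
    (hF : P13_23 ∈ 𝓕) (m : ℕ) (w : Fin (m + 4) → V)
    (hinj : Function.Injective w)
    (hcyc : ∀ i j : Fin (m + 4), H.Adj (w i) (w j) ↔ (j = i + 1 ∨ i = j + 1)) :
    HasCircuitIn {q : V × V | SameSCC (Arc H 𝓕) (w 0, w 1) q} :=
  stmt_9_general H 𝓕 hF m w hinj hcyc
end

section
/- Let H be a finite simple graph, 𝓕 ⊆ F_3, and H⁺ the constraint digraph of H with respect to 𝓕. If an ordered pair (x,y) of distinct vertices does not dominate any pair in H⁺ (i.e., has no out-neighbor in H⁺), then at least one of the following holds: (1) N(x) \ {y} ⊆ N(y) \ {x}; (2) N(y) \ {x} ⊆ N(x) \ {y}; or (3) the pair (y,x) does not dominate any pair in H⁺. -/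
open SimpleGraph

variable {V : Type*}

lemma key_aux {V : Type*} (P Q : V → Prop) (x y : V) (u v : Prop)
    (hall : ∀ z, z ≠ x → z ≠ y → ¬((P z ↔ u) ∧ (Q z ↔ v)))
    (c : V) (hcx : c ≠ x) (hcy : c ≠ y) (hPc : P c ↔ v) (hQc : Q c ↔ u) :
    (∀ z, z ≠ x → z ≠ y → P z → Q z) ∨ (∀ z, z ≠ x → z ≠ y → Q z → P z) := by
  by_cases hu : u <;> by_cases hv : v
  · exact absurd (hall c hcx hcy) (by tauto)
  · left; intro z hzx hzy hP
    by_contra hQ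
    exact hall z hzx hzy (by tauto)
  · right; intro z hzx hzy hQ
    by_contra hP
    exact hall z hzx hzy (by tauto)
  · exact absurd (hall c hcx hcy) (by tauto)

/-- If the pair `(x,y)` has no out-neighbor in `H⁺`, then `N(x) \ {y} ⊆ N(y) \ {x}`, or
`N(y) \ {x} ⊆ N(x) \ {y}`, or `(y,x)` has no out-neighbor in `H⁺`. -/
theorem stmt_10 [Fintype V] (H : SimpleGraph V) (𝓕 : Set (SimpleGraph (Fin 3)))
    (x y : V) (hxy : x ≠ y) (h : ∀ q : V × V, ¬ Arc H 𝓕 (x, y) q) :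
    H.neighborSet x \ {y} ⊆ H.neighborSet y \ {x} ∨
      H.neighborSet y \ {x} ⊆ H.neighborSet x \ {y} ∨
      ∀ q : V × V, ¬ Arc H 𝓕 (y, x) q := by
  by_cases harc : ∀ q : V × V, ¬ Arc H 𝓕 (y, x) q
  · exact Or.inr (Or.inr harc)
  push_neg at harc
  obtain ⟨q, a, b, c, ⟨F, hF, hind⟩, ⟨hpq, -⟩ | ⟨hpq, -⟩⟩ := harc
  · -- (y, x) = (a, b), triple (y, x, c) induces F
    obtain ⟨rfl, rfl⟩ : y = a ∧ x = b := by simpa [Prod.ext_iff] using hpq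
    obtain ⟨hyx, hyc, hxc, e01, e02, e12⟩ := hind
    have h1 : ∀ z, z ≠ x → z ≠ y →
        ¬((H.Adj x z ↔ F.Adj 0 2) ∧ (H.Adj y z ↔ F.Adj 1 2)) := by
      intro z hzx hzy hc
      exact h (z, y) ⟨x, y, z, ⟨F, hF,
        ⟨hxy, hzx.symm, hzy.symm, (H.adj_comm x y).trans e01, hc.1, hc.2⟩⟩,
        Or.inl ⟨rfl, rfl⟩⟩
    rcases key_aux (fun z => H.Adj x z) (fun z => H.Adj y z) x y
        (F.Adj 0 2) (F.Adj 1 2) h1 c hxc.symm hyc.symm e12 e02 with hk | hk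
    · left
      rintro z ⟨hz1, hz2⟩
      have hAdj : H.Adj x z := hz1
      have hzy : z ≠ y := hz2
      exact ⟨hk z hAdj.ne' hzy hAdj, hAdj.ne'⟩
    · right; left
      rintro z ⟨hz1, hz2⟩
      have hAdj : H.Adj y z := hz1
      have hzx : z ≠ x := hz2
      exact ⟨hk z hzx hAdj.ne' hAdj, hAdj.ne'⟩
  · -- (y, x) = (b, c), triple (a, y, x) induces F
    obtain ⟨rfl, rfl⟩ : y = b ∧ x = c := by simpa [Prod.ext_iff] using hpq
    obtain ⟨hay, hax, hyx, e01, e02, e12⟩ := hind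
    have h2 : ∀ w, w ≠ x → w ≠ y →
        ¬((H.Adj w x ↔ F.Adj 0 1) ∧ (H.Adj w y ↔ F.Adj 0 2)) := by
      intro w hwx hwy hc
      exact h (x, w) ⟨w, x, y, ⟨F, hF,
        ⟨hwx, hwy, hxy, hc.1, hc.2, (H.adj_comm x y).trans e12⟩⟩,
        Or.inr ⟨rfl, rfl⟩⟩
    rcases key_aux (fun z => H.Adj z x) (fun z => H.Adj z y) x y
        (F.Adj 0 1) (F.Adj 0 2) h2 a hax hay e02 e01 with hk | hk
    · left
      rintro z ⟨hz1, hz2⟩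
      have hAdj : H.Adj x z := hz1
      have hzy : z ≠ y := hz2
      exact ⟨(hk z hAdj.ne' hzy hAdj.symm).symm, hAdj.ne'⟩
    · right; left
      rintro z ⟨hz1, hz2⟩
      have hAdj : H.Adj y z := hz1
      have hzx : z ≠ x := hz2
      exact ⟨(hk z hzx hAdj.ne' hAdj.symm).symm, hAdj.ne'⟩
end
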